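/- Define I : E → ℝ on E = H¹₀(0,1) by I(u) = 1 − cos(2π‖u‖²) if ‖u‖ ≤ 1 and I(u) = J((‖u‖²−1)u) if ‖u‖ > 1, where J(u) = (1/2)‖u‖² − (1/(p+1))∫₀¹|u|^{p+1}, p ∈ (0,1). Then every point of the unit sphere S = {u ∈ E : ‖u‖ = 1} is a critical point of I with I(u) = 0, and 0 is an isolated critical point of I. -/

import Mathlib

/-!
Along a line `s ↦ u + s • v` through a point of the unit sphere, `g s = ‖u + s v‖² - 1`
is `O(s)`. Both branches of `I` are `O(|g|^(p+1))` when `|g| ≤ 1`: the cosine branch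
because `1 - cos (2π n) ≤ 2π² (n - 1)²`, the `J` branch because `(‖z‖² - 1) z` is small
both in `H¹₀` and in sup norm. Since `p + 1 > 1`, this is `o(s)`, so the directional
derivative vanishes.
Inside the unit ball `I` is radial, `I((1 + s) u) = 1 - cos (2π (1 + s)² ‖u‖²)`, with
derivative `4π ‖u‖² sin (2π ‖u‖²)` at `s = 0`, which is positive when `0 < ‖u‖² < 1/2`.
-/

noncomputable section

open MeasureTheory intervalIntegral

/-- Membership in (a dense model of) `H¹₀(0,1)`: `u` vanishes at the endpoints, is
continuous on `[0,1]`, differentiable on `(0,1)`, and its derivative is square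
integrable on `(0,1)`. -/
def MemH10 (u : ℝ → ℝ) : Prop :=
  u 0 = 0 ∧ u 1 = 0 ∧ ContinuousOn u (Set.Icc 0 1) ∧
    (∀ x ∈ Set.Ioo (0 : ℝ) 1, HasDerivAt u (deriv u x) x) ∧
    IntervalIntegrable (fun x => (deriv u x) ^ 2) volume 0 1

/-- The `H¹₀` norm `‖u‖ = (∫₀¹ |u_x|² dx)^{1/2}`. -/
def Hnorm (u : ℝ → ℝ) : ℝ := Real.sqrt (∫ x in (0 : ℝ)..1, (deriv u x) ^ 2)

/-- The functional `J(u) = ½‖u‖² − (1/(p+1)) ∫₀¹ |u|^{p+1} dx`. -/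
def J (p : ℝ) (u : ℝ → ℝ) : ℝ :=
  (1 / 2) * Hnorm u ^ 2 - (1 / (p + 1)) * ∫ x in (0 : ℝ)..1, |u x| ^ (p + 1)

open Real

/-- The piecewise functional `I(u) = 1 − cos(2π‖u‖²)` for `‖u‖ ≤ 1`,
`I(u) = J((‖u‖²−1)u)` for `‖u‖ > 1`. -/
def Ipw (p : ℝ) (u : ℝ → ℝ) : ℝ :=
  if Hnorm u ≤ 1 then 1 - Real.cos (2 * π * Hnorm u ^ 2)
  else J p ((Hnorm u ^ 2 - 1) • u)

/-- `u` is a critical point of `I` in the sense that all directional (Gateaux)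
derivatives along directions in `H¹₀(0,1)` vanish. -/
def IsCritPt (p : ℝ) (u : ℝ → ℝ) : Prop :=
  ∀ v : ℝ → ℝ, MemH10 v → HasDerivAt (fun s : ℝ => Ipw p (u + s • v)) 0 0

open Topology Filter Asymptotics Set

lemma isLittleO_abs_rpow_id {q : ℝ} (hq : 1 < q) : (fun s : ℝ => |s| ^ q) =o[𝓝 0] id := by
  have hq' : 0 < q - 1 := sub_pos.2 hq
  have hsmall : Tendsto (fun s : ℝ => |s| ^ (q - 1)) (𝓝 0) (𝓝 0) := by
    simpa [Real.zero_rpow hq'.ne'] using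
      ((continuous_abs.rpow_const fun _ => Or.inr hq'.le).tendsto 0)
  refine ((isLittleO_one_iff ℝ).2 hsmall |>.mul_isBigO (isBigO_refl id _).abs_left).congr
    (fun s => ?_) (fun s => one_mul s)
  rw [id, ← Real.rpow_add_one' (abs_nonneg s) (by linarith), sub_add_cancel]

lemma hasDerivAt_zero_of_isBigO_abs_rpow {f g : ℝ → ℝ} {q : ℝ} (hq : 1 < q)
    (hg : g =O[𝓝 0] id) (hf : f =O[𝓝 0] fun s => |g s| ^ q) : HasDerivAt f 0 0 := by
  have hg0 : g 0 = 0 := hg.eq_zero_imp.self_of_nhds rfl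
  have hf0 : f 0 = 0 :=
    hf.eq_zero_imp.self_of_nhds (by simp [hg0, Real.zero_rpow (by linarith : q ≠ 0)])
  rw [hasDerivAt_iff_isLittleO_nhds_zero]
  have hgq : (fun s => |g s| ^ q) =O[𝓝 0] fun s : ℝ => |s| ^ q :=
    hg.abs_abs.rpow (by linarith) (Eventually.of_forall fun s => abs_nonneg s)
  simp only [zero_add, hf0, sub_zero, smul_zero]
  exact hf.trans_isLittleO (hgq.trans_isLittleO (isLittleO_abs_rpow_id hq))

lemma one_sub_cos_two_pi_mul_le (n : ℝ) : 1 - cos (2 * π * n) ≤ 2 * π ^ 2 * (n - 1) ^ 2 := by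
  have h := one_sub_sq_div_two_le_cos (x := 2 * π * (n - 1))
  rw [mul_sub, mul_one, cos_sub_two_pi] at h
  nlinarith

lemma hnorm_sq (u : ℝ → ℝ) : Hnorm u ^ 2 = ∫ x in (0 : ℝ)..1, deriv u x ^ 2 :=
  Real.sq_sqrt (integral_nonneg zero_le_one fun _ _ => sq_nonneg _)

lemma hnorm_smul (c : ℝ) (u : ℝ → ℝ) : Hnorm (c • u) = |c| * Hnorm u := by
  have hderiv : deriv (c • u) = fun x => c * deriv u x := by
    rw [← deriv_const_mul_field']; rfl
  simp only [Hnorm, hderiv, mul_pow, intervalIntegral.integral_const_mul,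
    Real.sqrt_mul (sq_nonneg c), Real.sqrt_sq_eq_abs]

lemma integral_congr_Ioo {a b : ℝ} (hab : a ≤ b) {f g : ℝ → ℝ} (h : EqOn f g (Ioo a b)) :
    ∫ x in a..b, f x = ∫ x in a..b, g x := by
  rw [integral_of_le hab, integral_of_le hab, integral_Ioc_eq_integral_Ioo,
    integral_Ioc_eq_integral_Ioo]
  exact setIntegral_congr_fun measurableSet_Ioo h

namespace MemH10

variable {u v : ℝ → ℝ}

lemma intervalIntegrable_deriv_mul (hu : MemH10 u) (hv : MemH10 v) :
    IntervalIntegrable (fun x => deriv u x * deriv v x) volume 0 1 := by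
  refine (hu.2.2.2.2.add hv.2.2.2.2).mono_fun
    ((measurable_deriv u).mul (measurable_deriv v)).aestronglyMeasurable
    (Eventually.of_forall fun x => ?_)
  simp only [Real.norm_eq_abs, abs_mul]
  rw [abs_of_nonneg (by positivity : 0 ≤ deriv u x ^ 2 + deriv v x ^ 2)]
  nlinarith [sq_abs (deriv u x), sq_abs (deriv v x), sq_nonneg (|deriv u x| - |deriv v x|)]

lemma deriv_add_smul (hu : MemH10 u) (hv : MemH10 v) (s : ℝ) {x : ℝ} (hx : x ∈ Ioo 0 1) :
    deriv (u + s • v) x = deriv u x + s * deriv v x :=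
  ((hu.2.2.2.1 x hx).add ((hv.2.2.2.1 x hx).const_smul s)).deriv

lemma hnorm_add_smul_sq (hu : MemH10 u) (hv : MemH10 v) (s : ℝ) :
    Hnorm (u + s • v) ^ 2 = Hnorm u ^ 2 + 2 * s * (∫ x in (0 : ℝ)..1, deriv u x * deriv v x) +
      s ^ 2 * Hnorm v ^ 2 := by
  have hu2 := hu.2.2.2.2
  have huv := (hu.intervalIntegrable_deriv_mul hv).const_mul (2 * s)
  have hv2 := hv.2.2.2.2.const_mul (s ^ 2)
  rw [hnorm_sq, hnorm_sq, hnorm_sq, ← intervalIntegral.integral_const_mul,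
    ← intervalIntegral.integral_const_mul, ← integral_add hu2 huv,
    ← integral_add (hu2.add huv) hv2]
  refine integral_congr_Ioo zero_le_one fun x hx => ?_
  simp only [hu.deriv_add_smul hv s hx]
  ring

lemma exists_abs_le (hu : MemH10 u) : ∃ M, ∀ x ∈ Icc (0 : ℝ) 1, |u x| ≤ M :=
  isCompact_Icc.exists_bound_of_continuousOn hu.2.2.1

end MemH10

lemma abs_J_le {p M : ℝ} (hp : -1 ≤ p) {w : ℝ → ℝ}
    (hw : ∀ x ∈ Icc (0 : ℝ) 1, |w x| ≤ M) :
    |J p w| ≤ Hnorm w ^ 2 / 2 + M ^ (p + 1) / (p + 1) := by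
  have hp1 : 0 ≤ p + 1 := by linarith
  have hint : |∫ x in (0 : ℝ)..1, |w x| ^ (p + 1)| ≤ M ^ (p + 1) := by
    rw [← Real.norm_eq_abs]
    refine (intervalIntegral.norm_integral_le_of_norm_le_const fun x hx => ?_).trans_eq
      (by norm_num : M ^ (p + 1) * |(1 : ℝ) - 0| = M ^ (p + 1))
    rw [uIoc_of_le zero_le_one] at hx
    rw [Real.norm_of_nonneg (by positivity)]
    exact Real.rpow_le_rpow (abs_nonneg _) (hw x (Ioc_subset_Icc_self hx)) hp1
  calc |J p w| ≤ |1 / 2 * Hnorm w ^ 2| + |1 / (p + 1) * ∫ x in (0 : ℝ)..1, |w x| ^ (p + 1)| :=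
        abs_sub _ _
    _ ≤ Hnorm w ^ 2 / 2 + M ^ (p + 1) / (p + 1) := by
        rw [abs_of_nonneg (by positivity), abs_mul, abs_of_nonneg (by positivity)]
        gcongr
        · exact le_of_eq (by ring)
        · simpa [div_eq_inv_mul] using
            mul_le_mul_of_nonneg_left hint (by positivity : 0 ≤ (p + 1)⁻¹)

lemma abs_ipw_le {p M : ℝ} (hp₀ : -1 ≤ p) (hp₁ : p ≤ 1) {z : ℝ → ℝ}
    (hz : ∀ x ∈ Icc (0 : ℝ) 1, |z x| ≤ M) (hn : |Hnorm z ^ 2 - 1| ≤ 1) :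
    |Ipw p z| ≤ (2 * π ^ 2 + 1 + M ^ (p + 1) / (p + 1)) * |Hnorm z ^ 2 - 1| ^ (p + 1) := by
  set g := Hnorm z ^ 2 - 1 with hg
  have hM : 0 ≤ M := (abs_nonneg _).trans (hz 0 (left_mem_Icc.2 zero_le_one))
  have hCM : 0 ≤ M ^ (p + 1) / (p + 1) := div_nonneg (by positivity) (by linarith)
  have hg2 : g ^ 2 ≤ |g| ^ (p + 1) := by
    rw [← sq_abs, ← Real.rpow_two]
    exact Real.rpow_le_rpow_of_exponent_ge' (abs_nonneg g) hn (by linarith) (by linarith)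
  unfold Ipw
  split_ifs
  · rw [abs_of_nonneg (sub_nonneg.2 (cos_le_one _))]
    calc 1 - cos (2 * π * Hnorm z ^ 2) ≤ 2 * π ^ 2 * g ^ 2 := one_sub_cos_two_pi_mul_le _
      _ ≤ 2 * π ^ 2 * |g| ^ (p + 1) := by gcongr
      _ ≤ _ := by gcongr; linarith
  · have hw : ∀ x ∈ Icc (0 : ℝ) 1, |(g • z) x| ≤ |g| * M := fun x hx => by
      rw [Pi.smul_apply, smul_eq_mul, abs_mul]
      exact mul_le_mul_of_nonneg_left (hz x hx) (abs_nonneg g)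
    have hgz : Hnorm (g • z) ^ 2 = g ^ 2 * (1 + g) := by
      rw [hnorm_smul, mul_pow, sq_abs, hg]
      ring
    calc |J p (g • z)| ≤ Hnorm (g • z) ^ 2 / 2 + (|g| * M) ^ (p + 1) / (p + 1) :=
          abs_J_le hp₀ hw
      _ = g ^ 2 * (1 + g) / 2 + M ^ (p + 1) / (p + 1) * |g| ^ (p + 1) := by
        rw [hgz, Real.mul_rpow (abs_nonneg g) hM]
        ring
      _ ≤ 1 * |g| ^ (p + 1) + M ^ (p + 1) / (p + 1) * |g| ^ (p + 1) := by
        gcongr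
        nlinarith [(abs_le.1 hn).2, sq_nonneg g]
      _ ≤ _ := by nlinarith [pi_pos]

lemma ipw_of_hnorm_eq_one {p : ℝ} {u : ℝ → ℝ} (hu : Hnorm u = 1) : Ipw p u = 0 := by
  rw [Ipw, if_pos hu.le, hu, one_pow, mul_one, cos_two_pi, sub_self]

lemma isCritPt_of_hnorm_eq_one {p : ℝ} (hp₀ : 0 < p) (hp₁ : p ≤ 1) {u : ℝ → ℝ}
    (hu : MemH10 u) (hu1 : Hnorm u = 1) : IsCritPt p u := by
  intro v hv
  obtain ⟨Mu, hMu⟩ := hu.exists_abs_le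
  obtain ⟨Mv, hMv⟩ := hv.exists_abs_le
  set g : ℝ → ℝ := fun s => Hnorm (u + s • v) ^ 2 - 1
  have hg_eq : g = fun s => 2 * (∫ x in (0 : ℝ)..1, deriv u x * deriv v x) * s +
      Hnorm v ^ 2 * s ^ 2 := by
    ext s
    simp only [g, hu.hnorm_add_smul_sq hv, hu1]
    ring
  have hg : g =O[𝓝 0] id := by
    rw [hg_eq]
    exact ((isBigO_refl id _).const_mul_left _).add
      ((isLittleO_pow_id (𝕜 := ℝ) one_lt_two).isBigO.const_mul_left _)
  have hg_small : ∀ᶠ s in 𝓝 0, |g s| ≤ 1 :=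
    ((hg.trans_tendsto tendsto_id).abs.eventually_lt_const (by simp : |(0 : ℝ)| < 1)).mono
      fun _ => le_of_lt
  have hs_small : ∀ᶠ s : ℝ in 𝓝 0, |s| ≤ 1 :=
    mem_of_superset (Icc_mem_nhds (neg_lt_zero.2 one_pos) one_pos) fun _ hs => abs_le.2 hs
  refine hasDerivAt_zero_of_isBigO_abs_rpow (q := p + 1) (by linarith) hg
    (IsBigO.of_bound (2 * π ^ 2 + 1 + (Mu + Mv) ^ (p + 1) / (p + 1)) ?_)
  filter_upwards [hg_small, hs_small] with s hgs hs
  rw [Real.norm_eq_abs, Real.norm_of_nonneg (by positivity)]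
  refine abs_ipw_le (by linarith) hp₁ (fun x hx => ?_) hgs
  calc |(u + s • v) x| ≤ |u x| + |s| * |v x| := by
        simpa [abs_mul] using abs_add_le (u x) (s * v x)
    _ ≤ Mu + 1 * Mv := by
        gcongr
        exacts [hMu x hx, hMv x hx]
    _ = Mu + Mv := by ring

lemma hasDerivAt_ipw_add_smul_self (p : ℝ) {u : ℝ → ℝ} (hu : Hnorm u < 1) :
    HasDerivAt (fun s : ℝ => Ipw p (u + s • u))
      (4 * π * Hnorm u ^ 2 * sin (2 * π * Hnorm u ^ 2)) 0 := by
  set a := Hnorm u ^ 2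
  have hnear : ∀ᶠ s : ℝ in 𝓝 0, |1 + s| * Hnorm u < 1 :=
    ((continuous_const.add continuous_id).abs.mul continuous_const).tendsto' 0 _ (by simp)
      |>.eventually_lt_const hu
  have heq : (fun s => 1 - cos (2 * π * (1 + s) ^ 2 * a)) =ᶠ[𝓝 0]
      fun s => Ipw p (u + s • u) := by
    filter_upwards [hnear] with s hs
    rw [show u + s • u = (1 + s) • u by rw [add_smul, one_smul], Ipw, hnorm_smul, if_pos hs.le,
      mul_pow, sq_abs, mul_assoc]
  have hinner : HasDerivAt (fun s : ℝ => 2 * π * (1 + s) ^ 2 * a) (4 * π * a) 0 := by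
    refine ((((hasDerivAt_id (0 : ℝ)).const_add 1).fun_pow 2).const_mul (2 * π)
      |>.mul_const a).congr_deriv ?_
    simp only [id, add_zero, one_pow, Nat.cast_ofNat, mul_one]
    ring
  refine ((hinner.cos.const_sub 1).congr_of_eventuallyEq heq.symm).congr_deriv ?_
  norm_num
  ring

lemma not_isCritPt_of_hnorm_sq_lt {p : ℝ} {u : ℝ → ℝ} (hu : MemH10 u) (h₀ : 0 < Hnorm u)
    (h₁ : Hnorm u ^ 2 < 1 / 2) : ¬ IsCritPt p u := fun hcrit => by
  have hu1 : Hnorm u < 1 := by nlinarith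
  have hderiv := (hasDerivAt_ipw_add_smul_self p hu1).unique (hcrit u hu)
  have hsin : 0 < sin (2 * π * Hnorm u ^ 2) :=
    sin_pos_of_pos_of_lt_pi (by positivity) (by nlinarith [pi_pos])
  have : 0 < 4 * π * Hnorm u ^ 2 * sin (2 * π * Hnorm u ^ 2) := by positivity
  exact this.ne' hderiv

/-- Every point of the unit sphere `S = {‖u‖ = 1}` of `H¹₀(0,1)` is a critical point of the
piecewise functional `I` with `I(u) = 0`, and `0` is an isolated critical point of `I`. -/
theorem stmt_16 (p : ℝ) (hp : p ∈ Set.Ioo (0 : ℝ) 1) :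
    (∀ u : ℝ → ℝ, MemH10 u → Hnorm u = 1 → Ipw p u = 0 ∧ IsCritPt p u) ∧
      ∃ r > (0 : ℝ), ∀ u : ℝ → ℝ, MemH10 u → 0 < Hnorm u → Hnorm u < r →
        ¬ IsCritPt p u :=
  ⟨fun _ hu h => ⟨ipw_of_hnorm_eq_one h, isCritPt_of_hnorm_eq_one hp.1 hp.2.le hu h⟩,
    1 / 2, by norm_num, fun _ hu h₀ h₁ => not_isCritPt_of_hnorm_sq_lt hu h₀ (by nlinarith)⟩
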